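/- Let x and y be strict contractions in a unital C*-algebra (‖x‖ < 1, ‖y‖ < 1) and set T_x(y) = (1 − x x*)^{-1/2} (x + y)(1 + x* y)^{-1} (1 − x* x)^{1/2}. Then ‖T_x(y)‖ < 1 and 1 − ‖T_x(y)‖² ≤ (1 + ‖x‖²)·(1 − ‖y‖²) / (1 − ‖x‖·‖y‖)². -/

import Mathlib

/-- The inverse hyperbolic tangent `artanh t = (1/2)·log((1+t)/(1-t))`. -/
noncomputable def artanh (t : ℝ) : ℝ := Real.log ((1 + t) / (1 - t)) / 2

/-- `(1 - x x*)^{-1/2}`-type inverse square roots via the continuous functional calculus. -/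
noncomputable def cfcInvSqrt {B : Type*} [CStarAlgebra B] (a : B) : B :=
  cfc (fun t : ℝ => (Real.sqrt t)⁻¹) a

/-- Square roots via the continuous functional calculus. -/
noncomputable def cfcSqrt {B : Type*} [CStarAlgebra B] (a : B) : B :=
  cfc Real.sqrt a

/-- The Möbius map `T_x(y) = (1 − x x*)^{-1/2} (x + y)(1 + x* y)^{-1} (1 − x* x)^{1/2}`. -/
noncomputable def mobiusMap {B : Type*} [CStarAlgebra B] (x y : B) : B :=
  cfcInvSqrt (1 - x * star x) * (x + y) * Ring.inverse (1 + star x * y) *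
    cfcSqrt (1 - star x * x)

/-- The hyperbolic distance
`ρ(x,y) = artanh ‖(1 − x x*)^{-1/2} (x − y)(1 − x* y)^{-1} (1 − x* x)^{1/2}‖ = artanh ‖T_{−x}(y)‖`
on the open unit ball of a unital C*-algebra. -/
noncomputable def hypDist {B : Type*} [CStarAlgebra B] (x y : B) : ℝ :=
  artanh ‖cfcInvSqrt (1 - x * star x) * (x - y) * Ring.inverse (1 - star x * y) *
    cfcSqrt (1 - star x * x)‖

/-!
Write `a = (1 - x x⋆)^{-1/2}`, `b = (1 - x⋆ x)^{1/2}`, `s = (1 - y⋆ y)^{1/2}` and `u = 1 + x⋆ y`,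
so that `T = a (x + y) u⁻¹ b`. The push-through identity `(1 - x x⋆)⁻¹ x = x (1 - x⋆ x)⁻¹` gives
`(x + y)⋆ (1 - x x⋆)⁻¹ (x + y) + (1 - y⋆ y) = u⋆ (1 - x⋆ x)⁻¹ u`, hence `1 - T⋆ T = V⋆ V` with the
invertible element `V = s u⁻¹ b`. Whenever `1 - T⋆ T = V⋆ V` with `V` invertible, `1 - ‖T‖²` and
`‖V⁻¹‖⁻²` are both the least point of the spectrum of `V⋆ V`, so they agree; in particular
`‖T‖ < 1`. The same fact for `1 - y⋆ y = s⋆ s` gives `1 - ‖y‖² = ‖s⁻¹‖⁻²`, and `s⁻¹ = u⁻¹ b V⁻¹`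
together with `‖u⁻¹‖ ≤ (1 - ‖x‖ ‖y‖)⁻¹` and `‖b‖² ≤ 1 + ‖x‖²` yields the estimate.
-/

lemma spectrum_one_sub {R A : Type*} [CommRing R] [Ring A] [Algebra R A] (a : A) :
    spectrum R (1 - a) = (1 - ·) '' spectrum R a := by
  rw [← Set.singleton_sub, spectrum.singleton_sub_eq, map_one]

section RingIdentities

variable {R : Type*} [Ring R]

lemma inverse_one_sub_mul_mul_comm {x x' : R} (h : IsUnit (1 - x * x'))
    (h' : IsUnit (1 - x' * x)) :
    Ring.inverse (1 - x * x') * x = x * Ring.inverse (1 - x' * x) := by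
  calc Ring.inverse (1 - x * x') * x
      = Ring.inverse (1 - x * x') * (x * (1 - x' * x)) * Ring.inverse (1 - x' * x) := by
        rw [mul_assoc _ (x * _), mul_assoc x, Ring.mul_inverse_cancel _ h', mul_one]
    _ = Ring.inverse (1 - x * x') * (1 - x * x') * x * Ring.inverse (1 - x' * x) := by
        noncomm_ring
    _ = x * Ring.inverse (1 - x' * x) := by rw [Ring.inverse_mul_cancel _ h, one_mul]

lemma add_mul_inverse_mul_add_add_one_sub {x x' : R} (h : IsUnit (1 - x * x'))
    (h' : IsUnit (1 - x' * x)) (y y' : R) :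
    (x' + y') * Ring.inverse (1 - x * x') * (x + y) + (1 - y' * y) =
      (1 + y' * x) * Ring.inverse (1 - x' * x) * (1 + x' * y) := by
  have hex := inverse_one_sub_mul_mul_comm h h'
  have hx'e := (inverse_one_sub_mul_mul_comm h' h).symm
  set e := Ring.inverse (1 - x * x')
  set d := Ring.inverse (1 - x' * x)
  have he : e = 1 + x * d * x' := by
    calc e = e * (1 - x * x') + e * x * x' := by noncomm_ring
      _ = 1 + x * d * x' := by rw [Ring.inverse_mul_cancel _ h, hex]
  have hd : d * x' * x + 1 - d = 0 := by
    calc d * x' * x + 1 - d = 1 - d * (1 - x' * x) := by noncomm_ring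
      _ = 0 := by rw [Ring.inverse_mul_cancel _ h', sub_self]
  calc (x' + y') * e * (x + y) + (1 - y' * y)
      = x' * e * x + x' * e * y + y' * (e * x) + y' * e * y + (1 - y' * y) := by noncomm_ring
    _ = d * x' * x + d * x' * y + y' * (x * d) + y' * (1 + x * d * x') * y + (1 - y' * y) := by
        rw [hx'e, hex, ← he]
    _ = (d * x' * x + 1 - d) + (1 + y' * x) * d * (1 + x' * y) := by noncomm_ring
    _ = (1 + y' * x) * d * (1 + x' * y) := by rw [hd, zero_add]

lemma mul_inverse_mul_self_mul {b : R} (hb : IsUnit b) : b * Ring.inverse (b * b) * b = 1 := by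
  rw [Ring.mul_inverse_rev' (Commute.refl b), mul_assoc, mul_assoc, Ring.inverse_mul_cancel _ hb,
    mul_one, Ring.mul_inverse_cancel _ hb]

variable [StarRing R]

lemma star_mul_self_eq_one_sub_star_mul_self {x y a b s : R} (ha : IsSelfAdjoint a)
    (hb : IsSelfAdjoint b) (hs : IsSelfAdjoint s) (haa : a * a = Ring.inverse (1 - x * star x))
    (hbb : b * b = 1 - star x * x) (hss : s * s = 1 - star y * y)
    (hx : IsUnit (1 - x * star x)) (hb_unit : IsUnit b) (hu : IsUnit (1 + star x * y)) :
    star (a * (x + y) * Ring.inverse (1 + star x * y) * b) *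
        (a * (x + y) * Ring.inverse (1 + star x * y) * b) =
      1 - star (s * Ring.inverse (1 + star x * y) * b) *
        (s * Ring.inverse (1 + star x * y) * b) := by
  have hu_star : star (1 + star x * y) = 1 + star y * x := by
    rw [star_add, star_one, star_mul, star_star]
  have hident := eq_sub_of_add_eq <|
    add_mul_inverse_mul_add_add_one_sub hx (hbb ▸ hb_unit.mul hb_unit) y (star y)
  have hw_left : star (Ring.inverse (1 + star x * y)) * (1 + star y * x) = 1 := by
    rw [← Ring.inverse_star, hu_star, Ring.inverse_mul_cancel _ (hu_star ▸ hu.star)]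
  have hw_right := Ring.mul_inverse_cancel _ hu
  set w := Ring.inverse (1 + star x * y)
  simp only [star_mul, star_add, ha.star_eq, hb.star_eq, hs.star_eq]
  calc b * (star w * ((star x + star y) * a)) * (a * (x + y) * w * b)
      = b * star w * ((star x + star y) * (a * a) * (x + y)) * w * b := by noncomm_ring
    _ = b * (star w * (1 + star y * x)) * Ring.inverse (1 - star x * x) *
          ((1 + star x * y) * w) * b - b * (star w * (s * s) * w) * b := by
        rw [haa, hident, hss]; noncomm_ring
    _ = 1 - b * (star w * s) * (s * w * b) := by
        rw [hw_left, hw_right, mul_one, mul_one, ← hbb, mul_inverse_mul_self_mul hb_unit]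
        noncomm_ring

end RingIdentities

section NormedRing

variable {R : Type*} [NormedRing R]

lemma norm_neg_mul_lt_one {a b : R} (hab : ‖a‖ * ‖b‖ < 1) : ‖-(a * b)‖ < 1 :=
  ((norm_neg (a * b)).trans_le (norm_mul_le a b)).trans_lt hab

lemma isUnit_one_add_mul [HasSummableGeomSeries R] {a b : R} (hab : ‖a‖ * ‖b‖ < 1) :
    IsUnit (1 + a * b) := by
  simpa [sub_eq_add_neg] using isUnit_one_sub_of_norm_lt_one (norm_neg_mul_lt_one hab)

lemma norm_inverse_one_add_mul_le [NormOneClass R] [HasSummableGeomSeries R] {a b : R}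
    (hab : ‖a‖ * ‖b‖ < 1) : ‖Ring.inverse (1 + a * b)‖ ≤ (1 - ‖a‖ * ‖b‖)⁻¹ := by
  have hlt := norm_neg_mul_lt_one hab
  have hgeom := tsum_geometric_le_of_norm_lt_one _ hlt
  rw [geom_series_eq_inverse _ hlt, sub_neg_eq_add, norm_one, sub_self, zero_add] at hgeom
  exact hgeom.trans (by gcongr; exact (norm_neg _).trans_le (norm_mul_le a b))

lemma inv_norm_inverse_mul_le [Nontrivial R] {s w : R} (hs : IsUnit s) (hsw : IsUnit (s * w)) :
    ‖Ring.inverse (s * w)‖⁻¹ ≤ ‖Ring.inverse s‖⁻¹ * ‖w‖ := by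
  have hinv : Ring.inverse s = w * Ring.inverse (s * w) := by
    calc Ring.inverse s = Ring.inverse s * (s * w * Ring.inverse (s * w)) := by
          rw [Ring.mul_inverse_cancel _ hsw, mul_one]
      _ = w * Ring.inverse (s * w) := by
          rw [mul_assoc s, ← mul_assoc, Ring.inverse_mul_cancel _ hs, one_mul]
  have hs_pos : 0 < ‖Ring.inverse s‖ := norm_pos_iff.mpr (isUnit_ringInverse.mpr hs).ne_zero
  have hsw_pos : 0 < ‖Ring.inverse (s * w)‖ :=
    norm_pos_iff.mpr (isUnit_ringInverse.mpr hsw).ne_zero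
  rw [inv_mul_eq_div, le_div_iff₀ hs_pos, inv_mul_le_iff₀ hsw_pos, hinv]
  exact (norm_mul_le _ _).trans_eq (mul_comm _ _)

end NormedRing

section CStarAlgebra

variable {A : Type*} [CStarAlgebra A]

lemma isSelfAdjoint_cfcSqrt (a : A) : IsSelfAdjoint (cfcSqrt a) := cfc_predicate _ _

lemma isSelfAdjoint_cfcInvSqrt (a : A) : IsSelfAdjoint (cfcInvSqrt a) := cfc_predicate _ _

variable [PartialOrder A] [StarOrderedRing A]

lemma isStrictlyPositive_one_sub_star_mul_self {x : A} (hx : ‖x‖ < 1) :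
    IsStrictlyPositive (1 - star x * x) := by
  have hx2 : ‖star x * x‖ < 1 := by
    rw [CStarRing.norm_star_mul_self]; nlinarith [norm_nonneg x]
  exact (isUnit_one_sub_of_norm_lt_one hx2).isStrictlyPositive <| sub_nonneg.mpr <|
    (CStarAlgebra.norm_le_one_iff_of_nonneg _ (star_mul_self_nonneg x)).mp hx2.le

lemma cfcSqrt_eq_sqrt {a : A} (ha : 0 ≤ a) : cfcSqrt a = CFC.sqrt a := by
  rw [cfcSqrt, CFC.sqrt_eq_real_sqrt a ha, cfcₙ_eq_cfc]

lemma cfcInvSqrt_eq_inverse_cfcSqrt {a : A} (ha : IsStrictlyPositive a) :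
    cfcInvSqrt a = Ring.inverse (cfcSqrt a) :=
  cfc_inv Real.sqrt a (fun t ht => (Real.sqrt_pos.mpr (ha.spectrum_pos ht)).ne')

lemma cfcSqrt_mul_self {a : A} (ha : 0 ≤ a) : cfcSqrt a * cfcSqrt a = a := by
  rw [cfcSqrt_eq_sqrt ha, CFC.sqrt_mul_sqrt_self a ha]

lemma isUnit_cfcSqrt {a : A} (ha : IsStrictlyPositive a) : IsUnit (cfcSqrt a) := by
  rw [cfcSqrt_eq_sqrt ha.nonneg]
  exact ha.isUnit_cfcSqrt

lemma cfcInvSqrt_mul_self {a : A} (ha : IsStrictlyPositive a) :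
    cfcInvSqrt a * cfcInvSqrt a = Ring.inverse a := by
  rw [cfcInvSqrt_eq_inverse_cfcSqrt ha, ← Ring.mul_inverse_rev' (Commute.refl _),
    cfcSqrt_mul_self ha.nonneg]

lemma sq_norm_cfcSqrt {a : A} (ha : 0 ≤ a) : ‖cfcSqrt a‖ ^ 2 = ‖a‖ := by
  rw [cfcSqrt_eq_sqrt ha, CFC.norm_sqrt a ha, Real.sq_sqrt (norm_nonneg a)]

variable [Nontrivial A]

lemma isGreatest_spectrum_norm_of_nonneg {a : A} (ha : 0 ≤ a) :
    IsGreatest (spectrum ℝ a) ‖a‖ :=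
  ⟨CStarAlgebra.norm_mem_spectrum_of_nonneg ha,
    fun _ hr => (Real.le_norm_self _).trans (spectrum.norm_le_norm_of_mem hr)⟩

lemma isLeast_spectrum_inv_norm_inverse {a : A} (ha : IsStrictlyPositive a) :
    IsLeast (spectrum ℝ a) ‖Ring.inverse a‖⁻¹ := by
  lift a to Aˣ using ha.isUnit
  rw [Ring.inverse_unit]
  have hinv := isGreatest_spectrum_norm_of_nonneg (CFC.inv_nonneg_of_nonneg a ha.nonneg)
  have hpos : 0 < ‖(↑a⁻¹ : A)‖ := norm_pos_iff.mpr a⁻¹.ne_zero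
  refine ⟨?_, fun μ hμ => ?_⟩
  · simpa using (spectrum.inv_mem_iff (r := Units.mk0 _ hpos.ne')).mpr (by simpa using hinv.1)
  have hμ0 : μ ≠ 0 := spectrum.ne_zero_of_mem_of_unit hμ
  have hμ_inv : μ⁻¹ ∈ spectrum ℝ (↑a⁻¹ : A) := by
    simpa using (spectrum.inv_mem_iff (r := Units.mk0 μ hμ0)).mp hμ
  exact inv_le_of_inv_le₀ (ha.spectrum_pos hμ) (hinv.2 hμ_inv)

theorem one_sub_sq_norm_eq_inv_norm_inverse_sq {T V : A} (hV : IsUnit V)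
    (h : star T * T = 1 - star V * V) : 1 - ‖T‖ ^ 2 = ‖Ring.inverse V‖⁻¹ ^ 2 := by
  have hQ : star V * V = 1 - star T * T := by rw [h, sub_sub_cancel]
  have hQ_pos : IsStrictlyPositive (star V * V) :=
    (hV.star.mul hV).isStrictlyPositive (star_mul_self_nonneg V)
  have hQ_inv : ‖Ring.inverse (star V * V)‖ = ‖Ring.inverse V‖ ^ 2 := by
    lift V to Aˣ using hV
    rw [← Units.coe_star, ← Units.val_mul, Ring.inverse_unit, Ring.inverse_unit, mul_inv_rev,
      Units.val_mul, Units.coe_star_inv, CStarRing.norm_self_mul_star, sq]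
  have hleast : IsLeast (spectrum ℝ (star V * V)) (1 - ‖T‖ ^ 2) := by
    rw [hQ, spectrum_one_sub, sq, ← CStarRing.norm_star_mul_self]
    exact antitone_const_tsub.map_isGreatest
      (isGreatest_spectrum_norm_of_nonneg (star_mul_self_nonneg T))
  rw [inv_pow, ← hQ_inv]
  exact hleast.unique (isLeast_spectrum_inv_norm_inverse hQ_pos)

end CStarAlgebra

section MobiusMap

variable {A : Type*} [CStarAlgebra A]

noncomputable def mobiusDefect (x y : A) : A :=
  cfcSqrt (1 - star y * y) * Ring.inverse (1 + star x * y) * cfcSqrt (1 - star x * x)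

variable {x y : A}

lemma norm_star_mul_norm_lt_one (hx : ‖x‖ < 1) (hy : ‖y‖ < 1) : ‖star x‖ * ‖y‖ < 1 := by
  rw [norm_star]
  exact mul_lt_one_of_nonneg_of_lt_one_left (norm_nonneg x) hx hy.le

variable [PartialOrder A] [StarOrderedRing A]

lemma isUnit_mobiusDefect (hx : ‖x‖ < 1) (hy : ‖y‖ < 1) : IsUnit (mobiusDefect x y) :=
  ((isUnit_cfcSqrt (isStrictlyPositive_one_sub_star_mul_self hy)).mul
    (isUnit_ringInverse.mpr (isUnit_one_add_mul (norm_star_mul_norm_lt_one hx hy)))).mul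
    (isUnit_cfcSqrt (isStrictlyPositive_one_sub_star_mul_self hx))

lemma star_mobiusMap_mul_self (hx : ‖x‖ < 1) (hy : ‖y‖ < 1) :
    star (mobiusMap x y) * mobiusMap x y = 1 - star (mobiusDefect x y) * mobiusDefect x y := by
  have hxx : IsStrictlyPositive (1 - x * star x) := by
    simpa using isStrictlyPositive_one_sub_star_mul_self (x := star x) (by rwa [norm_star])
  have hx'x := isStrictlyPositive_one_sub_star_mul_self hx
  exact star_mul_self_eq_one_sub_star_mul_self (isSelfAdjoint_cfcInvSqrt _)
    (isSelfAdjoint_cfcSqrt _) (isSelfAdjoint_cfcSqrt _) (cfcInvSqrt_mul_self hxx)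
    (cfcSqrt_mul_self hx'x.nonneg)
    (cfcSqrt_mul_self (isStrictlyPositive_one_sub_star_mul_self hy).nonneg)
    hxx.isUnit (isUnit_cfcSqrt hx'x) (isUnit_one_add_mul (norm_star_mul_norm_lt_one hx hy))

lemma inv_norm_inverse_mobiusDefect_sq_le [Nontrivial A] (hx : ‖x‖ < 1) (hy : ‖y‖ < 1) :
    ‖Ring.inverse (mobiusDefect x y)‖⁻¹ ^ 2 ≤
      (1 + ‖x‖ ^ 2) * (1 - ‖y‖ ^ 2) / (1 - ‖x‖ * ‖y‖) ^ 2 := by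
  have hy'y := isStrictlyPositive_one_sub_star_mul_self hy
  set s := cfcSqrt (1 - star y * y)
  set w := Ring.inverse (1 + star x * y)
  set b := cfcSqrt (1 - star x * x)
  have hs := isUnit_cfcSqrt hy'y
  have hS := one_sub_sq_norm_eq_inv_norm_inverse_sq (T := y) hs <| by
    rw [(isSelfAdjoint_cfcSqrt _).star_eq, cfcSqrt_mul_self hy'y.nonneg, sub_sub_cancel]
  have hy2 : 0 ≤ 1 - ‖y‖ ^ 2 := by rw [hS]; positivity
  have hw : ‖w‖ ≤ (1 - ‖x‖ * ‖y‖)⁻¹ := by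
    simpa only [norm_star] using norm_inverse_one_add_mul_le (norm_star_mul_norm_lt_one hx hy)
  have hb : ‖b‖ ^ 2 ≤ 1 + ‖x‖ ^ 2 := by
    rw [sq_norm_cfcSqrt (isStrictlyPositive_one_sub_star_mul_self hx).nonneg, ← norm_one (α := A),
      sq, ← CStarRing.norm_star_mul_self]
    exact norm_sub_le _ _
  have hD : mobiusDefect x y = s * (w * b) := mul_assoc _ _ _
  calc ‖Ring.inverse (mobiusDefect x y)‖⁻¹ ^ 2 ≤ (‖Ring.inverse s‖⁻¹ * ‖w * b‖) ^ 2 := by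
        rw [hD]
        gcongr
        exact inv_norm_inverse_mul_le hs (hD ▸ isUnit_mobiusDefect hx hy)
    _ ≤ (‖Ring.inverse s‖⁻¹ * (‖w‖ * ‖b‖)) ^ 2 := by gcongr; exact norm_mul_le _ _
    _ = (1 - ‖y‖ ^ 2) * ‖w‖ ^ 2 * ‖b‖ ^ 2 := by rw [hS]; ring
    _ ≤ (1 - ‖y‖ ^ 2) * ((1 - ‖x‖ * ‖y‖)⁻¹) ^ 2 * (1 + ‖x‖ ^ 2) := by gcongr
    _ = (1 + ‖x‖ ^ 2) * (1 - ‖y‖ ^ 2) / (1 - ‖x‖ * ‖y‖) ^ 2 := by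
      rw [inv_pow, div_eq_mul_inv]; ring

end MobiusMap

/-- Let `x`, `y` be strict contractions in a unital C*-algebra and let
`T_x(y) = (1 − x x*)^{-1/2} (x + y)(1 + x* y)^{-1} (1 − x* x)^{1/2}`. Then `‖T_x(y)‖ < 1` and
`1 − ‖T_x(y)‖² ≤ (1 + ‖x‖²)·(1 − ‖y‖²)/(1 − ‖x‖·‖y‖)²`. -/
theorem mobiusMap_norm_lt_one_and_estimate
    {B : Type*} [CStarAlgebra B] (x y : B) (hx : ‖x‖ < 1) (hy : ‖y‖ < 1) :
    ‖mobiusMap x y‖ < 1 ∧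
      1 - ‖mobiusMap x y‖ ^ 2 ≤ (1 + ‖x‖ ^ 2) * (1 - ‖y‖ ^ 2) / (1 - ‖x‖ * ‖y‖) ^ 2 := by
  nontriviality B
  let _ := CStarAlgebra.spectralOrder B
  have _ := CStarAlgebra.spectralOrderedRing B
  have hD := isUnit_mobiusDefect hx hy
  have h := one_sub_sq_norm_eq_inv_norm_inverse_sq hD (star_mobiusMap_mul_self hx hy)
  refine ⟨?_, h.trans_le (inv_norm_inverse_mobiusDefect_sq_le hx hy)⟩
  have hD_pos : 0 < ‖Ring.inverse (mobiusDefect x y)‖⁻¹ :=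
    inv_pos.mpr (norm_pos_iff.mpr (isUnit_ringInverse.mpr hD).ne_zero)
  exact (sq_lt_one_iff₀ (norm_nonneg _)).mp (by nlinarith)
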